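/- Let d1, d2 ≥ 1, let Ω1, Ω2 be measurable parameter spaces, and let g1 : ℝ^{d1} × Ω1 → ℝ and g2 : ℝ^{d2} × Ω2 → ℝ be measurable defining functions whose generalized Radon transforms are each injective on finite complex Borel measures (whenever two finite complex Borel measures ρ1, ρ2 on ℝ^{d_i} satisfy g_i(·,θ)♯ρ1 = g_i(·,θ)♯ρ2 for all θ ∈ Ω_i, then ρ1 = ρ2). Then the Hierarchical Hybrid Radon Transform is injective on finite Borel measures: if μ, ν are finite Borel measures on ℝ^{d1} × ℝ^{d2} such that for all θ1 ∈ Ω1, θ2 ∈ Ω2 and ψ = (ψ1, ψ2) ∈ S^1 the pushforwards of μ and ν under the map (x1, x2) ↦ ψ1 g1(x1, θ1) + ψ2 g2(x2, θ2) coincide, then μ = ν. (Proposition 2.) -/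

import Mathlib

open MeasureTheory ENNReal
open scoped RealInnerProductSpace

noncomputable section

/-- `Euc d` is the Euclidean space `ℝ^d`. -/
abbrev Euc (d : ℕ) := EuclideanSpace ℝ (Fin d)

/-!
Rescaling the unit direction `ψ`, the hypothesis determines every one-dimensional projection
`t1 u + t2 v` of the joint law of `(g1 x1 θ1, g2 x2 θ2)`; by Cramér–Wold (uniqueness of
characteristic functions on `ℝ²`) the joint laws under `μ` and `ν` agree. For fixed `θ2` and
`E`, restricting to `g2 x2 θ2 ∈ E` and projecting to `ℝ^{d1}` gives finite measures with equal
`g1`-slices, so injectivity of the first transform gives `μ (A × g2(·, θ2)⁻¹ E) = ν (…)`.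
Restricting to `x1 ∈ A` and projecting to `ℝ^{d2}`, injectivity of the second transform then
gives `μ (A × B) = ν (A × B)`, and measurable rectangles determine finite measures.
-/

namespace MeasureTheory.Measure

variable {X Y : Type*} [MeasurableSpace X] [MeasurableSpace Y]

def toComplexMeasure (μ : Measure X) [IsFiniteMeasure μ] : ComplexMeasure X :=
  μ.toSignedMeasure.toComplexMeasure 0

lemma toComplexMeasure_apply (μ : Measure X) [IsFiniteMeasure μ] {s : Set X}
    (hs : MeasurableSet s) : μ.toComplexMeasure s = μ.real s := by
  simp [toComplexMeasure, SignedMeasure.toComplexMeasure_apply,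
    toSignedMeasure_apply_measurable hs, Complex.ext_iff]

lemma toComplexMeasure_injective {μ ν : Measure X} [IsFiniteMeasure μ] [IsFiniteMeasure ν]
    (h : μ.toComplexMeasure = ν.toComplexMeasure) : μ = ν := by
  ext s hs
  have := congrArg (· s) h
  simp only [toComplexMeasure_apply _ hs, Complex.ofReal_inj] at this
  exact (ENNReal.toReal_eq_toReal_iff' (measure_ne_top μ s) (measure_ne_top ν s)).mp this

lemma toComplexMeasure_map (μ : Measure X) [IsFiniteMeasure μ] {f : X → Y}
    (hf : Measurable f) : μ.toComplexMeasure.map f = (μ.map f).toComplexMeasure := by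
  ext s hs
  rw [VectorMeasure.map_apply _ hf hs, toComplexMeasure_apply _ (hf hs),
    toComplexMeasure_apply _ hs, map_measureReal_apply hf hs]

lemma ext_of_forall_map_eq_of_complexMeasure_ext {Ω Z : Type*} [MeasurableSpace Z]
    {f : Ω → X → Z} (hf : ∀ θ, Measurable (f θ))
    (hinj : ∀ ρ1 ρ2 : ComplexMeasure X, (∀ θ, ρ1.map (f θ) = ρ2.map (f θ)) → ρ1 = ρ2)
    {μ ν : Measure X} [IsFiniteMeasure μ] [IsFiniteMeasure ν]
    (h : ∀ θ, μ.map (f θ) = ν.map (f θ)) : μ = ν :=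
  toComplexMeasure_injective <| hinj _ _ fun θ => by
    simp only [toComplexMeasure_map _ (hf θ), h θ]

lemma map_fst_restrict_snd_preimage_apply (μ : Measure (X × Y)) {A : Set X} (B : Set Y)
    (hA : MeasurableSet A) :
    (μ.restrict (Prod.snd ⁻¹' B)).map Prod.fst A = μ (A ×ˢ B) := by
  rw [map_apply measurable_fst hA, restrict_apply (measurable_fst hA), Set.prod_eq]

lemma map_snd_restrict_fst_preimage_apply (μ : Measure (X × Y)) (A : Set X) {B : Set Y}
    (hB : MeasurableSet B) :
    (μ.restrict (Prod.fst ⁻¹' A)).map Prod.snd B = μ (A ×ˢ B) := by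
  rw [map_apply measurable_snd hB, restrict_apply (measurable_snd hB), Set.prod_eq,
    Set.inter_comm]

lemma ext_of_forall_map_prodMap_eq {ι κ Z W : Type*} [MeasurableSpace Z] [MeasurableSpace W]
    {f : ι → X → Z} {g : κ → Y → W} (hf : ∀ i, Measurable (f i)) (hg : ∀ j, Measurable (g j))
    (hf_ext : ∀ (μ ν : Measure X) [IsFiniteMeasure μ] [IsFiniteMeasure ν],
      (∀ i, μ.map (f i) = ν.map (f i)) → μ = ν)
    (hg_ext : ∀ (μ ν : Measure Y) [IsFiniteMeasure μ] [IsFiniteMeasure ν],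
      (∀ j, μ.map (g j) = ν.map (g j)) → μ = ν)
    {μ ν : Measure (X × Y)} [IsFiniteMeasure μ] [IsFiniteMeasure ν]
    (h : ∀ i j, μ.map (Prod.map (f i) (g j)) = ν.map (Prod.map (f i) (g j))) : μ = ν := by
  have h_fiber : ∀ j {A : Set X} {E : Set W}, MeasurableSet A → MeasurableSet E →
      μ (A ×ˢ (g j ⁻¹' E)) = ν (A ×ˢ (g j ⁻¹' E)) := by
    intro j A E hA hE
    have hE' : MeasurableSet (g j ⁻¹' E) := hg j hE
    have h_eq := hf_ext ((μ.restrict (Prod.snd ⁻¹' (g j ⁻¹' E))).map Prod.fst)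
      ((ν.restrict (Prod.snd ⁻¹' (g j ⁻¹' E))).map Prod.fst) fun i => by
        ext D hD
        rw [map_apply (hf i) hD, map_apply (hf i) hD,
          map_fst_restrict_snd_preimage_apply _ _ (hf i hD),
          map_fst_restrict_snd_preimage_apply _ _ (hf i hD), ← Set.preimage_prod_map_prod,
          ← map_apply ((hf i).prodMap (hg j)) (hD.prod hE),
          ← map_apply ((hf i).prodMap (hg j)) (hD.prod hE), h i j]
    rw [← map_fst_restrict_snd_preimage_apply _ _ hA, h_eq,
      map_fst_restrict_snd_preimage_apply _ _ hA]
  refine ext_prod fun {A B} hA hB => ?_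
  have h_eq := hg_ext ((μ.restrict (Prod.fst ⁻¹' A)).map Prod.snd)
    ((ν.restrict (Prod.fst ⁻¹' A)).map Prod.snd) fun j => by
      ext E hE
      rw [map_apply (hg j) hE, map_apply (hg j) hE,
        map_snd_restrict_fst_preimage_apply _ _ (hg j hE),
        map_snd_restrict_fst_preimage_apply _ _ (hg j hE), h_fiber j hA hE]
  rw [← map_snd_restrict_fst_preimage_apply _ _ hB, h_eq,
    map_snd_restrict_fst_preimage_apply _ _ hB]

lemma ext_of_forall_map_eq_of_sq_add_sq_eq_one {μ ν : Measure (ℝ × ℝ)} [IsFiniteMeasure μ]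
    [IsFiniteMeasure ν]
    (h : ∀ a b : ℝ, a ^ 2 + b ^ 2 = 1 →
      μ.map (fun p => a * p.1 + b * p.2) = ν.map (fun p => a * p.1 + b * p.2)) : μ = ν := by
  refine ext_of_charFunDual (funext fun L => ?_)
  -- polar coordinates of `(L (1, 0), L (0, 1))` write `L` as a multiple of a unit direction
  set z : ℂ := ⟨L (1, 0), L (0, 1)⟩
  have hL : ∀ p : ℝ × ℝ, L p = ‖z‖ * (Real.cos z.arg * p.1 + Real.sin z.arg * p.2) := by
    intro p
    rw [mul_add, ← mul_assoc, ← mul_assoc, Complex.norm_mul_cos_arg, Complex.norm_mul_sin_arg]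
    calc L p = L (p.1 • ((1 : ℝ), (0 : ℝ)) + p.2 • ((0 : ℝ), (1 : ℝ))) := by
          congr 1; ext <;> simp
      _ = _ := by rw [map_add, map_smul, map_smul]; simp [z, mul_comm]
  have h_circ := h _ _ (Real.cos_sq_add_sin_sq z.arg)
  have h_meas : Measurable fun p : ℝ × ℝ => Real.cos z.arg * p.1 + Real.sin z.arg * p.2 := by
    fun_prop
  simp only [charFunDual_apply, hL]
  have h_int := congrArg (fun m : Measure ℝ => ∫ y, Complex.exp ((‖z‖ * y : ℝ) * Complex.I) ∂m)
    h_circ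
  have h_cont : Continuous fun y : ℝ => Complex.exp ((‖z‖ * y : ℝ) * Complex.I) := by fun_prop
  simpa only [integral_map h_meas.aemeasurable h_cont.aestronglyMeasurable] using h_int

end MeasureTheory.Measure

theorem hierarchical_hybrid_radon_transform_injective_general (d1 d2 : ℕ)
    {Ω1 Ω2 : Type*} [MeasurableSpace Ω1] [MeasurableSpace Ω2]
    (g1 : Euc d1 → Ω1 → ℝ) (g2 : Euc d2 → Ω2 → ℝ)
    (hg1 : Measurable (Function.uncurry g1)) (hg2 : Measurable (Function.uncurry g2))
    (hinj1 : ∀ ρ1 ρ2 : ComplexMeasure (Euc d1),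
      (∀ θ : Ω1, ρ1.map (fun x => g1 x θ) = ρ2.map (fun x => g1 x θ)) → ρ1 = ρ2)
    (hinj2 : ∀ ρ1 ρ2 : ComplexMeasure (Euc d2),
      (∀ θ : Ω2, ρ1.map (fun x => g2 x θ) = ρ2.map (fun x => g2 x θ)) → ρ1 = ρ2)
    (μ ν : Measure (Euc d1 × Euc d2)) [IsFiniteMeasure μ] [IsFiniteMeasure ν]
    (h : ∀ (θ1 : Ω1) (θ2 : Ω2) (ψ1 ψ2 : ℝ), ψ1 ^ 2 + ψ2 ^ 2 = 1 →
      μ.map (fun z : Euc d1 × Euc d2 => ψ1 * g1 z.1 θ1 + ψ2 * g2 z.2 θ2)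
        = ν.map (fun z : Euc d1 × Euc d2 => ψ1 * g1 z.1 θ1 + ψ2 * g2 z.2 θ2)) :
    μ = ν := by
  have hg1θ : ∀ θ, Measurable fun x => g1 x θ := fun _ => hg1.of_uncurry_right
  have hg2θ : ∀ θ, Measurable fun x => g2 x θ := fun _ => hg2.of_uncurry_right
  refine Measure.ext_of_forall_map_prodMap_eq hg1θ hg2θ
    (fun _ _ _ _ => Measure.ext_of_forall_map_eq_of_complexMeasure_ext hg1θ hinj1)
    (fun _ _ _ _ => Measure.ext_of_forall_map_eq_of_complexMeasure_ext hg2θ hinj2)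
    fun θ1 θ2 => Measure.ext_of_forall_map_eq_of_sq_add_sq_eq_one fun ψ1 ψ2 hψ => ?_
  have h_joint : Measurable (Prod.map (fun x => g1 x θ1) (fun x => g2 x θ2)) :=
    (hg1θ θ1).prodMap (hg2θ θ2)
  rw [Measure.map_map (by fun_prop) h_joint, Measure.map_map (by fun_prop) h_joint]
  exact h θ1 θ2 ψ1 ψ2 hψ

/-- **Injectivity of the Hierarchical Hybrid Radon Transform** (Proposition 2):
if the generalized Radon transforms with defining functions `g1, g2` are each injective
on finite complex Borel measures, then the HHRT
`(x1, x2) ↦ ψ1 g1(x1, θ1) + ψ2 g2(x2, θ2)`, over all `θ1 ∈ Ω1`, `θ2 ∈ Ω2`,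
`ψ = (ψ1, ψ2) ∈ S^1`, is injective on finite Borel measures on `ℝ^{d1} × ℝ^{d2}`. -/
theorem hierarchical_hybrid_radon_transform_injective (d1 d2 : ℕ) (hd1 : 1 ≤ d1) (hd2 : 1 ≤ d2)
    {Ω1 Ω2 : Type*} [MeasurableSpace Ω1] [MeasurableSpace Ω2]
    (g1 : Euc d1 → Ω1 → ℝ) (g2 : Euc d2 → Ω2 → ℝ)
    (hg1 : Measurable (Function.uncurry g1)) (hg2 : Measurable (Function.uncurry g2))
    (hinj1 : ∀ ρ1 ρ2 : ComplexMeasure (Euc d1),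
      (∀ θ : Ω1, ρ1.map (fun x => g1 x θ) = ρ2.map (fun x => g1 x θ)) → ρ1 = ρ2)
    (hinj2 : ∀ ρ1 ρ2 : ComplexMeasure (Euc d2),
      (∀ θ : Ω2, ρ1.map (fun x => g2 x θ) = ρ2.map (fun x => g2 x θ)) → ρ1 = ρ2)
    (μ ν : Measure (Euc d1 × Euc d2)) [IsFiniteMeasure μ] [IsFiniteMeasure ν]
    (h : ∀ (θ1 : Ω1) (θ2 : Ω2) (ψ1 ψ2 : ℝ), ψ1 ^ 2 + ψ2 ^ 2 = 1 →
      μ.map (fun z : Euc d1 × Euc d2 => ψ1 * g1 z.1 θ1 + ψ2 * g2 z.2 θ2)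
        = ν.map (fun z : Euc d1 × Euc d2 => ψ1 * g1 z.1 θ1 + ψ2 * g2 z.2 θ2)) :
    μ = ν :=
  hierarchical_hybrid_radon_transform_injective_general d1 d2 g1 g2 hg1 hg2 hinj1 hinj2 μ ν h

end
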